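/- Fix n ≥ 1 and work in the field F = ℚ(q,t) of rational functions in two variables (the fraction field of ℚ[q,t]). For compositions I, J of n define u(I,k) := q^{k−d(I,k)} if k ∈ Des(I) and u(I,k) := t^{1+d(I,k)} if k ∉ Des(I) (for 1 ≤ k ≤ n−1), D_I := ∏_{k=1}^{n−1} (t^{1+d(I,k)} − q^{k−d(I,k)}) ∈ F, and g̃_{I,J} := (−1)^{ℓ(I)−ℓ(J)} · (∏_{k ∈ {1,…,n−1} \ Des(J)} u(I,k)) / D_I ∈ F. Then the matrix (g̃_{I,J}) is the inverse of the Kostka matrix (k̃_{I,J}): for all compositions I, J of n, ∑_{L composition of n} k̃_{I,L} · g̃_{L,J} equals 1 if I = J and 0 otherwise. -/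

import Mathlib

open Finset

instance {n : ℕ} : DecidableEq (Composition n) := fun a b =>
  decidable_of_iff (a.blocks = b.blocks) ⟨fun h => Composition.ext h, fun h => congrArg _ h⟩

/-- The descent set of a composition of `n`: the set of proper partial sums
`i₁, i₁+i₂, …, i₁+⋯+i_{ℓ(I)−1}`, a subset of `{1,…,n−1}`. -/
def Des {n : ℕ} (I : Composition n) : Finset ℕ :=
  (Finset.Ioo 0 I.length).image I.sizeUpTo

/-- `d I k` is the number of descents of `I` that are strictly less than `k`. -/
def d {n : ℕ} (I : Composition n) (k : ℕ) : ℕ :=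
  ((Des I).filter (· < k)).card

/-- The field `ℚ(q,t)` of rational functions, as the fraction field of `ℚ[q,t]`. -/
abbrev Fqt : Type _ := FractionRing (MvPolynomial (Fin 2) ℚ)

noncomputable def qF : Fqt := algebraMap (MvPolynomial (Fin 2) ℚ) Fqt (MvPolynomial.X 0)

noncomputable def tF : Fqt := algebraMap (MvPolynomial (Fin 2) ℚ) Fqt (MvPolynomial.X 1)

/-- The noncommutative `(q,t)`-Kostka monomial `k̃_{I,J} = ∏_{k ∈ Des I} v(J,k)`,
regarded as an element of `ℚ(q,t)`. -/
noncomputable def kostkaF {n : ℕ} (I J : Composition n) : Fqt :=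
  ∏ k ∈ Des I, if k ∈ Des J then tF ^ (1 + d J k) else qF ^ (k - d J k)

/-- `u(I,k) := q^{k−d(I,k)}` if `k ∈ Des I`, `t^{1+d(I,k)}` otherwise. -/
noncomputable def uF {n : ℕ} (I : Composition n) (k : ℕ) : Fqt :=
  if k ∈ Des I then qF ^ (k - d I k) else tF ^ (1 + d I k)

/-- `D_I := ∏_{k=1}^{n−1} (t^{1+d(I,k)} − q^{k−d(I,k)})`. -/
noncomputable def DF {n : ℕ} (I : Composition n) : Fqt :=
  ∏ k ∈ Finset.Icc 1 (n - 1), (tF ^ (1 + d I k) - qF ^ (k - d I k))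

/-- `g̃_{I,J} := (−1)^{ℓ(I)−ℓ(J)} (∏_{k ∈ {1,…,n−1} \ Des J} u(I,k)) / D_I`. -/
noncomputable def gF {n : ℕ} (I J : Composition n) : Fqt :=
  (-1 : Fqt) ^ ((I.length : ℤ) - (J.length : ℤ)) *
    (∏ k ∈ Finset.Ioo 0 n \ Des J, uF I k) / DF I

/-!
Through descent sets, compositions of `n` are the subsets `M` of `{1, …, n-1}`, and
`k̃_{I,L} g̃_{L,J}` splits as a product over `k ∈ {1, …, n-1}` of local factors, each depending on
membership of `k` in `Des I`, `Des J`, `M = Des L` and on `d(M,k)` (the sign `(-1)^{ℓ(L)-ℓ(J)}`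
is `(-1)^{#M + #Des J}`). Let `a` be the largest element of the index set. The sets `M` and
`insert a M` have the same factors at all `k < a`, while their factors at `a` share the
denominator `t^{1+m} - q^{a-m}` (`m = #M`) and add up to `[a ∈ Des I ↔ a ∈ Des J]`. Summing over
`M` by induction therefore gives `∏_k [k ∈ Des I ↔ k ∈ Des J] = δ_{I,J}`.
-/

namespace DescentSet

variable {K : Type*} [Field K] (q t : K)

def below (M : Finset ℕ) (k : ℕ) : ℕ := #(M.filter (· < k))

def v (M : Finset ℕ) (k : ℕ) : K :=
  if k ∈ M then t ^ (1 + below M k) else q ^ (k - below M k)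

def u (M : Finset ℕ) (k : ℕ) : K :=
  if k ∈ M then q ^ (k - below M k) else t ^ (1 + below M k)

def D (M : Finset ℕ) (k : ℕ) : K := t ^ (1 + below M k) - q ^ (k - below M k)

def localFactor (S T M : Finset ℕ) (k : ℕ) : K :=
  (if k ∈ M then -1 else 1) * (if k ∈ S then v q t M k else 1) *
    (if k ∈ T then -1 else u q t M k) / D q t M k

lemma below_insert_of_le {a k : ℕ} (M : Finset ℕ) (h : k ≤ a) :
    below (insert a M) k = below M k := by
  rw [below, below, filter_insert, if_neg (not_lt.mpr h)]

lemma localFactor_insert_of_lt (S T M : Finset ℕ) {a k : ℕ} (h : k < a) :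
    localFactor q t S T (insert a M) k = localFactor q t S T M k := by
  simp only [localFactor, v, u, D, below_insert_of_le M h.le, mem_insert, h.ne, false_or]

variable {q t}

lemma localFactor_add_localFactor_insert (hqt : ∀ i j : ℕ, t ^ (i + 1) ≠ q ^ j)
    (S T : Finset ℕ) {M : Finset ℕ} {a : ℕ} (ha : a ∉ M) :
    localFactor q t S T M a + localFactor q t S T (insert a M) a =
      if (a ∈ S ↔ a ∈ T) then 1 else 0 := by
  have hD : t ^ (1 + below M a) - q ^ (a - below M a) ≠ 0 :=
    sub_ne_zero.mpr (add_comm 1 (below M a) ▸ hqt _ _)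
  simp only [localFactor, v, u, D, below_insert_of_le M le_rfl, mem_insert_self, ha, if_true,
    if_false]
  split_ifs <;> first | tauto | (field_simp; ring)

theorem sum_powerset_prod_localFactor (hqt : ∀ i j : ℕ, t ^ (i + 1) ≠ q ^ j)
    (P S T : Finset ℕ) :
    ∑ M ∈ P.powerset, ∏ k ∈ P, localFactor q t S T M k =
      ∏ k ∈ P, if (k ∈ S ↔ k ∈ T) then 1 else 0 := by
  induction P using Finset.induction_on_max with
  | empty => simp
  | insert a s hlt ih =>
    have has : a ∉ s := fun h => lt_irrefl a (hlt a h)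
    calc ∑ M ∈ (insert a s).powerset, ∏ k ∈ insert a s, localFactor q t S T M k
        = ∑ M ∈ s.powerset, (localFactor q t S T M a + localFactor q t S T (insert a M) a) *
            ∏ k ∈ s, localFactor q t S T M k := by
          rw [sum_powerset_insert has, ← sum_add_distrib]
          refine sum_congr rfl fun M _ => ?_
          rw [prod_insert has, prod_insert has,
            prod_congr rfl fun k hk => localFactor_insert_of_lt q t S T M (hlt k hk)]
          ring
      _ = ∏ k ∈ insert a s, if (k ∈ S ↔ k ∈ T) then 1 else 0 := by
          rw [prod_insert has, ← ih, mul_sum]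
          exact sum_congr rfl fun M hM => by
            rw [localFactor_add_localFactor_insert hqt S T fun h => has (mem_powerset.mp hM h)]

end DescentSet

lemma prod_ite_mem_iff_mem {M₀ α : Type*} [CommMonoidWithZero M₀] [DecidableEq α]
    {P S T : Finset α} (hS : S ⊆ P) (hT : T ⊆ P) :
    (∏ k ∈ P, if (k ∈ S ↔ k ∈ T) then 1 else 0 : M₀) = if S = T then 1 else 0 := by
  rw [prod_boole]
  refine if_congr ⟨fun h => ext fun k => ⟨fun hk => (h k (hS hk)).1 hk,
    fun hk => (h k (hT hk)).2 hk⟩, fun h k _ => by rw [h]⟩ rfl rfl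

section Descents

variable {n : ℕ}

lemma strictMonoOn_sizeUpTo (I : Composition n) : StrictMonoOn I.sizeUpTo (Set.Iic I.length) :=
  strictMonoOn_Iic_of_lt_succ fun _ h => I.sizeUpTo_strict_mono h

lemma Des_subset_Ioo (I : Composition n) : Des I ⊆ Ioo 0 n := by
  intro x hx
  obtain ⟨i, hi, rfl⟩ := mem_image.mp hx
  rw [mem_Ioo] at hi ⊢
  constructor
  · simpa only [I.sizeUpTo_zero] using
      strictMonoOn_sizeUpTo I (Set.mem_Iic.mpr (Nat.zero_le _)) (Set.mem_Iic.mpr hi.2.le) hi.1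
  · simpa only [I.sizeUpTo_length] using
      strictMonoOn_sizeUpTo I (Set.mem_Iic.mpr hi.2.le) (Set.mem_Iic.mpr le_rfl) hi.2

lemma card_Des (I : Composition n) : #(Des I) = I.length - 1 := by
  rw [Des, card_image_of_injOn ((strictMonoOn_sizeUpTo I).injOn.mono fun i hi => ?_),
    Nat.card_Ioo, Nat.sub_zero]
  exact Set.mem_Iic.mpr (mem_Ioo.mp hi).2.le

lemma length_sub_length_eq_card_Des_sub_card_Des (I J : Composition n) :
    (I.length : ℤ) - J.length = #(Des I) - #(Des J) := by
  rw [card_Des, card_Des]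
  rcases Nat.eq_zero_or_pos n with rfl | hn
  · have := I.length_le
    have := J.length_le
    omega
  · have := I.length_pos_of_pos hn
    have := J.length_pos_of_pos hn
    omega

lemma mem_boundaries_iff (I : Composition n) (x : Fin (n + 1)) :
    x ∈ I.boundaries ↔ (x : ℕ) = 0 ∨ (x : ℕ) = n ∨ (x : ℕ) ∈ Des I := by
  have hboundary (i : Fin (I.length + 1)) : (I.boundary.toEmbedding i : ℕ) = I.sizeUpTo i :=
    rfl
  simp only [Composition.boundaries, mem_map, mem_univ, true_and, Fin.ext_iff, hboundary,
    Fin.exists_iff, Nat.lt_succ_iff, Des, mem_image, mem_Ioo]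
  constructor
  · rintro ⟨i, hi, hx⟩
    rw [← hx]
    by_cases h0 : i = 0
    · exact Or.inl (by rw [h0, I.sizeUpTo_zero])
    by_cases hl : i = I.length
    · exact Or.inr (Or.inl (by rw [hl, I.sizeUpTo_length]))
    exact Or.inr (Or.inr ⟨i, ⟨by omega, by omega⟩, rfl⟩)
  · rintro (h | h | ⟨i, hi, h⟩)
    · exact ⟨0, Nat.zero_le _, by rw [I.sizeUpTo_zero, h]⟩
    · exact ⟨I.length, le_rfl, by rw [I.sizeUpTo_length, h]⟩
    · exact ⟨i, hi.2.le, h⟩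

lemma Des_injective : Function.Injective (Des (n := n)) := by
  intro I J h
  apply (compositionEquiv n).injective
  apply CompositionAsSet.ext
  show I.boundaries = J.boundaries
  ext x
  rw [mem_boundaries_iff, mem_boundaries_iff, h]

lemma image_Des_univ : (univ : Finset (Composition n)).image Des = (Ioo 0 n).powerset := by
  refine eq_of_subset_of_card_le (fun M hM => ?_) ?_
  · obtain ⟨I, _, rfl⟩ := mem_image.mp hM
    exact mem_powerset.mpr (Des_subset_Ioo I)
  · rw [card_powerset, Nat.card_Ioo, card_image_of_injective _ Des_injective, card_univ,
      composition_card, Nat.sub_zero]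

end Descents

lemma tF_pow_succ_ne_qF_pow (i j : ℕ) : tF ^ (i + 1) ≠ qF ^ j := by
  rw [tF, qF, ← map_pow, ← map_pow, (IsFractionRing.injective (MvPolynomial (Fin 2) ℚ) Fqt).ne_iff,
    MvPolynomial.X_pow_eq_monomial, MvPolynomial.X_pow_eq_monomial, Ne,
    (MvPolynomial.monomial_left_injective one_ne_zero).eq_iff, Finsupp.single_eq_single_iff]
  simp

open DescentSet in
lemma kostkaF_mul_gF {n : ℕ} (I J L : Composition n) :
    kostkaF I L * gF L J = ∏ k ∈ Ioo 0 n, localFactor qF tF (Des I) (Des J) (Des L) k := by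
  have hsign : ∏ k ∈ Ioo 0 n, (if k ∈ Des L then -1 else 1 : Fqt) = (-1) ^ #(Des L) := by
    rw [prod_ite_mem, inter_eq_right.mpr (Des_subset_Ioo L), prod_const]
  have hkostka : ∏ k ∈ Ioo 0 n, (if k ∈ Des I then v qF tF (Des L) k else 1) = kostkaF I L := by
    rw [prod_ite_mem, inter_eq_right.mpr (Des_subset_Ioo I)]
    rfl
  have hu : ∏ k ∈ Ioo 0 n, (if k ∈ Des J then -1 else u qF tF (Des L) k) =
      (-1) ^ #(Des J) * ∏ k ∈ Ioo 0 n \ Des J, uF L k := by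
    rw [prod_ite, filter_mem_eq_inter, inter_eq_right.mpr (Des_subset_Ioo J), prod_const,
      filter_notMem_eq_sdiff]
    rfl
  have hD : ∏ k ∈ Ioo 0 n, D qF tF (Des L) k = DF L := by
    rw [DF, show Icc 1 (n - 1) = Ioo 0 n by ext; simp only [mem_Icc, mem_Ioo]; omega]
    rfl
  have hlength : (-1 : Fqt) ^ ((L.length : ℤ) - J.length) = (-1) ^ #(Des L) * (-1) ^ #(Des J) := by
    rw [length_sub_length_eq_card_Des_sub_card_Des, zpow_sub₀ (neg_ne_zero.mpr one_ne_zero),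
      zpow_natCast, zpow_natCast, div_eq_mul_inv, ← inv_pow, inv_neg, inv_one]
  simp only [localFactor, prod_div_distrib, prod_mul_distrib, hsign, hkostka, hu, hD, gF, hlength]
  ring

theorem kostka_mul_g_eq_delta_general {n : ℕ} (I J : Composition n) :
    ∑ L : Composition n, kostkaF I L * gF L J = if I = J then 1 else 0 := by
  have hreindex : ∑ L : Composition n, kostkaF I L * gF L J =
      ∑ M ∈ (Ioo 0 n).powerset, ∏ k ∈ Ioo 0 n, DescentSet.localFactor qF tF (Des I) (Des J) M k := by
    rw [← image_Des_univ, sum_image fun _ _ _ _ h => Des_injective h]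
    exact sum_congr rfl fun L _ => kostkaF_mul_gF I J L
  rw [hreindex, DescentSet.sum_powerset_prod_localFactor tF_pow_succ_ne_qF_pow,
    prod_ite_mem_iff_mem (Des_subset_Ioo I) (Des_subset_Ioo J)]
  exact if_congr Des_injective.eq_iff rfl rfl

/-- The matrix `(g̃_{I,J})` is inverse to the Kostka matrix `(k̃_{I,J})`:
`∑_L k̃_{I,L} g̃_{L,J} = δ_{I,J}`. -/
theorem kostka_mul_g_eq_delta {n : ℕ} (hn : 1 ≤ n) (I J : Composition n) :
    ∑ L : Composition n, kostkaF I L * gF L J = if I = J then 1 else 0 :=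
  kostka_mul_g_eq_delta_general I J
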